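/- arXiv:1710.00315 — 4 statements merged into one kernel-verified Lean document; each statement's English description precedes it below -/
import Mathlib

section
/- Let p ≥ 1 be a real number and set k_p = ⌊(p+1)/2⌋. Then for all nonnegative reals x, y, one has Σ_{k=0}^{k_p - 1} (Γ(p+1)/(Γ(k+1)Γ(p+1−k))) (x^k y^{p−k} + x^{p−k} y^k) ≤ (x+y)^p ≤ Σ_{k=0}^{k_p} (Γ(p+1)/(Γ(k+1)Γ(p+1−k))) (x^k y^{p−k} + x^{p−k} y^k). -/
/-!
Write `C(p, k)` for `Ring.choose p k` and, for `t > 0`,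
`R_{a,b}(p, t) = (1 + t)^p - ∑_{k<a} C(p,k) t^k - ∑_{k<b} C(p,k) t^(p-k)`.
With `t = x / y`, the two inequalities say that `R_{m,m}(p, t) ≥ 0` and `R_{m+1,m+1}(p, t) ≤ 0`
for `m = ⌊(p+1)/2⌋`. Since `d/dt R_{a+1,b}(p, t) = p R_{a,b}(p-1, t)` and `R_{a+1,b}(p, 0)` is
minus the tail `∑_{k<b} C(p,k) 0^(p-k)`, a sign of `R_{a,b}(p-1, ·)` passes to `R_{a+1,b}(p, ·)`
by monotonicity. At `a = 0` the substitution `t ↦ 1/t` exchanges the two sums, turning `R_{0,b}`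
into the Taylor remainder `R_{b,0}` of `(1 + s)^p`, whose sign is settled by the same induction.
The cases `x = 0` or `y = 0` follow by continuity.
-/

open Finset Real Polynomial

theorem Ring.choose_eq_descPochhammer_eval_div {K : Type*} [Field K] [CharZero K] (r : K) (k : ℕ) :
    Ring.choose r k = (descPochhammer K k).eval r / k.factorial := by
  rw [Ring.choose_eq_smul, smul_eq_mul, inv_mul_eq_div, ← aeval_eq_smeval, aeval_def, ← eval_map,
    descPochhammer_map]

theorem Ring.choose_nonneg {K : Type*} [Field K] [LinearOrder K] [IsStrictOrderedRing K]
    {r : K} {k : ℕ} (h : (k : K) - 1 ≤ r) : 0 ≤ Ring.choose r k := by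
  rw [Ring.choose_eq_descPochhammer_eval_div]
  exact div_nonneg (descPochhammer_nonneg h) (by positivity)

theorem Ring.succ_mul_choose_succ {K : Type*} [Field K] [CharZero K] (r : K) (k : ℕ) :
    ((k : K) + 1) * Ring.choose r (k + 1) = r * Ring.choose (r - 1) k := by
  rw [Ring.choose_eq_descPochhammer_eval_div, Ring.choose_eq_descPochhammer_eval_div,
    descPochhammer_succ_left, eval_mul, eval_X, eval_comp, eval_sub, eval_X, eval_one,
    Nat.factorial_succ]
  push_cast
  field_simp

theorem Ring.choose_mul_sub {K : Type*} [Field K] [CharZero K] (r : K) (k : ℕ) :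
    Ring.choose r k * (r - k) = r * Ring.choose (r - 1) k := by
  rw [← Ring.succ_mul_choose_succ, Ring.choose_eq_descPochhammer_eval_div,
    Ring.choose_eq_descPochhammer_eval_div, descPochhammer_succ_eval, Nat.factorial_succ]
  push_cast
  field_simp

theorem Real.Gamma_add_one_eq_descPochhammer_mul {q : ℝ} :
    ∀ {k : ℕ}, (k : ℝ) < q + 1 → Gamma (q + 1) = (descPochhammer ℝ k).eval q * Gamma (q + 1 - k)
  | 0, _ => by simp
  | k + 1, hk => by
    push_cast at hk
    rw [Gamma_add_one_eq_descPochhammer_mul (by linarith), descPochhammer_succ_eval, mul_assoc,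
      show q + 1 - k = (q - k) + 1 by ring, Gamma_add_one (by linarith)]
    push_cast
    ring_nf

theorem Real.Gamma_div_Gamma_mul_Gamma_eq_choose {q : ℝ} {k : ℕ} (hk : (k : ℝ) < q + 1) :
    Gamma (q + 1) / (Gamma (k + 1) * Gamma (q + 1 - k)) = Ring.choose q k := by
  have hG : Gamma (q + 1 - k) ≠ 0 := (Gamma_pos_of_pos (by linarith)).ne'
  rw [Gamma_add_one_eq_descPochhammer_mul hk, Gamma_nat_eq_factorial,
    Ring.choose_eq_descPochhammer_eval_div]
  field_simp

noncomputable section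

def binomHead (a : ℕ) (q t : ℝ) : ℝ := ∑ k ∈ range a, Ring.choose q k * t ^ k

def binomTail (b : ℕ) (q t : ℝ) : ℝ := ∑ k ∈ range b, Ring.choose q k * t ^ (q - k)

def binomRemainder (a b : ℕ) (q t : ℝ) : ℝ := (1 + t) ^ q - binomHead a q t - binomTail b q t

def binomSymmSum (n : ℕ) (p x y : ℝ) : ℝ :=
  ∑ k ∈ range n, Ring.choose p k * (x ^ (k : ℝ) * y ^ (p - k) + x ^ (p - k) * y ^ (k : ℝ))

end

section BinomRemainder

variable {a b : ℕ} {q t : ℝ}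

theorem binomTail_eq_rpow_mul_binomHead_inv (ht : 0 < t) :
    binomTail b q t = t ^ q * binomHead b q t⁻¹ := by
  rw [binomTail, binomHead, mul_sum]
  refine sum_congr rfl fun k _ => ?_
  rw [rpow_sub ht, inv_pow, rpow_natCast]
  ring

theorem binomRemainder_eq_rpow_mul_swap (ht : 0 < t) :
    binomRemainder a b q t = t ^ q * binomRemainder b a q t⁻¹ := by
  have hbase : (1 + t) ^ q = t ^ q * (1 + t⁻¹) ^ q := by
    rw [← mul_rpow ht.le (by positivity), mul_add, mul_inv_cancel₀ ht.ne', mul_one, add_comm]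
  have hhead : binomHead a q t = t ^ q * binomTail a q t⁻¹ := by
    rw [binomTail_eq_rpow_mul_binomHead_inv (inv_pos.2 ht), inv_inv, ← mul_assoc,
      ← mul_rpow ht.le (inv_pos.2 ht).le, mul_inv_cancel₀ ht.ne', one_rpow, one_mul]
  rw [binomRemainder, binomRemainder, hbase, hhead, binomTail_eq_rpow_mul_binomHead_inv ht]
  ring

theorem continuous_binomRemainder (hq : 0 ≤ q) (hb : (b : ℝ) - 1 ≤ q) :
    Continuous (binomRemainder a b q) := by
  have htail : Continuous (binomTail b q) := continuous_finsetSum _ fun k hk => by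
    have : (k : ℝ) + 1 ≤ b := by exact_mod_cast mem_range.1 hk
    exact continuous_const.mul (continuous_rpow_const (by linarith))
  have hhead : Continuous (binomHead a q) := continuous_finsetSum _ fun k _ => by fun_prop
  exact (((continuous_const.add continuous_id).rpow_const fun _ => Or.inr hq).sub hhead).sub htail

theorem hasDerivAt_binomHead_succ (t : ℝ) :
    HasDerivAt (binomHead (a + 1) q) (q * binomHead a (q - 1) t) t := by
  refine (HasDerivAt.fun_sum fun k (_ : k ∈ range (a + 1)) =>
    (hasDerivAt_pow k t).const_mul (Ring.choose q k)).congr_deriv ?_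
  rw [sum_range_succ', binomHead, mul_sum]
  simp only [Nat.cast_zero, zero_mul, mul_zero, add_zero, add_tsub_cancel_right, Nat.cast_add,
    Nat.cast_one]
  refine sum_congr rfl fun k _ => ?_
  rw [← mul_assoc q, ← Ring.succ_mul_choose_succ]
  ring

theorem hasDerivAt_binomTail (ht : t ≠ 0) :
    HasDerivAt (binomTail b q) (q * binomTail b (q - 1) t) t := by
  refine (HasDerivAt.fun_sum fun k (_ : k ∈ range b) =>
    (hasDerivAt_rpow_const (p := q - k) (Or.inl ht)).const_mul (Ring.choose q k)).congr_deriv ?_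
  rw [binomTail, mul_sum]
  refine sum_congr rfl fun k _ => ?_
  rw [← mul_assoc q, ← Ring.choose_mul_sub, sub_right_comm]
  ring

theorem hasDerivAt_binomRemainder_succ (ht : 0 < t) :
    HasDerivAt (binomRemainder (a + 1) b q) (q * binomRemainder a b (q - 1) t) t := by
  have hbase : HasDerivAt (fun s => (1 + s) ^ q) (q * (1 + t) ^ (q - 1)) t := by
    simpa using ((hasDerivAt_id t).const_add 1).rpow_const (p := q) (Or.inl (by positivity))
  refine ((hbase.sub (hasDerivAt_binomHead_succ t)).sub
    (hasDerivAt_binomTail ht.ne')).congr_deriv ?_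
  rw [binomRemainder]
  ring

theorem binomRemainder_succ_zero : binomRemainder (a + 1) b q 0 = -binomTail b q 0 := by
  simp [binomRemainder, binomHead, sum_range_succ']

theorem binomTail_nonneg (hq : (b : ℝ) - 2 ≤ q) (ht : 0 ≤ t) : 0 ≤ binomTail b q t :=
  sum_nonneg fun k hk => by
    have : (k : ℝ) + 1 ≤ b := by exact_mod_cast mem_range.1 hk
    exact mul_nonneg (Ring.choose_nonneg (by linarith)) (rpow_nonneg ht _)

theorem binomTail_zero (hq : (b : ℝ) - 1 < q) : binomTail b q 0 = 0 :=
  sum_eq_zero fun k hk => by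
    have : (k : ℝ) + 1 ≤ b := by exact_mod_cast mem_range.1 hk
    rw [zero_rpow (by linarith), mul_zero]

theorem binomRemainder_succ_left_le (ha : (a : ℝ) - 1 ≤ q) (ht : 0 ≤ t) :
    binomRemainder (a + 1) b q t ≤ binomRemainder a b q t := by
  have := mul_nonneg (Ring.choose_nonneg ha) (pow_nonneg ht a)
  simp only [binomRemainder, binomHead, sum_range_succ]
  linarith

theorem monotoneOn_binomRemainder_succ (hq : 0 ≤ q) (hb : (b : ℝ) - 1 ≤ q)
    (h : ∀ t > 0, 0 ≤ binomRemainder a b (q - 1) t) :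
    MonotoneOn (binomRemainder (a + 1) b q) (Set.Ici 0) := by
  refine monotoneOn_of_hasDerivWithinAt_nonneg (f' := fun t => q * binomRemainder a b (q - 1) t)
    (convex_Ici 0) (continuous_binomRemainder hq hb).continuousOn (fun t ht => ?_) fun t ht => ?_
  all_goals rw [interior_Ici] at ht
  · exact (hasDerivAt_binomRemainder_succ ht).hasDerivWithinAt
  · exact mul_nonneg hq (h t ht)

theorem antitoneOn_binomRemainder_succ (hq : 0 ≤ q) (hb : (b : ℝ) - 1 ≤ q)
    (h : ∀ t > 0, binomRemainder a b (q - 1) t ≤ 0) :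
    AntitoneOn (binomRemainder (a + 1) b q) (Set.Ici 0) := by
  refine antitoneOn_of_hasDerivWithinAt_nonpos (f' := fun t => q * binomRemainder a b (q - 1) t)
    (convex_Ici 0) (continuous_binomRemainder hq hb).continuousOn (fun t ht => ?_) fun t ht => ?_
  all_goals rw [interior_Ici] at ht
  · exact (hasDerivAt_binomRemainder_succ ht).hasDerivWithinAt
  · exact mul_nonpos_of_nonneg_of_nonpos hq (h t ht)

theorem binomRemainder_zero_right_nonneg (hq : (a : ℝ) - 1 ≤ q) (ht : 0 ≤ t) :
    0 ≤ binomRemainder a 0 q t := by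
  induction a generalizing q t with
  | zero => simpa [binomRemainder, binomHead, binomTail] using rpow_nonneg (by linarith) q
  | succ a ih =>
    push_cast at hq
    have hmono := monotoneOn_binomRemainder_succ (a := a) (b := 0) (q := q) (by linarith)
      (by simp; linarith) fun s hs => ih (by linarith) hs.le
    calc 0 = binomRemainder (a + 1) 0 q 0 := by simp [binomRemainder_succ_zero, binomTail]
      _ ≤ binomRemainder (a + 1) 0 q t := hmono Set.self_mem_Ici ht ht

theorem binomRemainder_zero_right_nonpos (hq₁ : (a : ℝ) - 1 ≤ q) (hq₂ : q ≤ a) (ht : 0 ≤ t) :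
    binomRemainder (a + 1) 0 q t ≤ 0 := by
  induction a generalizing q t with
  | zero =>
    simpa [binomRemainder, binomHead, binomTail] using
      rpow_le_one_of_one_le_of_nonpos (by linarith) (by simpa using hq₂)
  | succ a ih =>
    push_cast at hq₁ hq₂
    have hanti := antitoneOn_binomRemainder_succ (a := a + 1) (b := 0) (q := q) (by linarith)
      (by simp; linarith) fun s hs => ih (by linarith) (by linarith) hs.le
    calc binomRemainder (a + 1 + 1) 0 q t ≤ binomRemainder (a + 1 + 1) 0 q 0 :=
          hanti Set.self_mem_Ici ht ht
      _ = 0 := by simp [binomRemainder_succ_zero, binomTail]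

theorem binomRemainder_nonneg (hq : (a : ℝ) + b - 1 ≤ q) (ht : 0 < t) :
    0 ≤ binomRemainder a b q t := by
  induction a generalizing q t with
  | zero =>
    rw [binomRemainder_eq_rpow_mul_swap ht]
    exact mul_nonneg (rpow_nonneg ht.le q)
      (binomRemainder_zero_right_nonneg (by simpa using hq) (inv_pos.2 ht).le)
  | succ a ih =>
    push_cast at hq
    have hmono := monotoneOn_binomRemainder_succ (a := a) (b := b) (q := q) (by linarith)
      (by linarith) fun s hs => ih (by linarith) hs
    calc 0 = binomRemainder (a + 1) b q 0 := by
          rw [binomRemainder_succ_zero, binomTail_zero (by linarith), neg_zero]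
      _ ≤ binomRemainder (a + 1) b q t := hmono Set.self_mem_Ici ht.le ht.le

theorem binomRemainder_nonpos (hq₁ : (a : ℝ) + b - 1 ≤ q) (hq₂ : q ≤ a + b) (ht : 0 < t) :
    binomRemainder a (b + 1) q t ≤ 0 := by
  induction a generalizing q t with
  | zero =>
    rw [binomRemainder_eq_rpow_mul_swap ht]
    exact mul_nonpos_of_nonneg_of_nonpos (rpow_nonneg ht.le q)
      (binomRemainder_zero_right_nonpos (by simpa using hq₁) (by simpa using hq₂) (inv_pos.2 ht).le)
  | succ a ih =>
    push_cast at hq₁ hq₂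
    have hanti := antitoneOn_binomRemainder_succ (a := a) (b := b + 1) (q := q) (by linarith)
      (by push_cast; linarith) fun s hs => ih (by linarith) (by linarith) hs
    calc binomRemainder (a + 1) (b + 1) q t ≤ binomRemainder (a + 1) (b + 1) q 0 :=
          hanti Set.self_mem_Ici ht.le ht.le
      _ ≤ 0 := by
          rw [binomRemainder_succ_zero, neg_nonpos]
          exact binomTail_nonneg (by push_cast; linarith) le_rfl

end BinomRemainder

theorem binomRemainder_succ_succ_nonpos {m : ℕ} {p t : ℝ} (h₁ : 2 * (m : ℝ) - 1 ≤ p)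
    (h₂ : p ≤ 2 * m + 1) (ht : 0 < t) : binomRemainder (m + 1) (m + 1) p t ≤ 0 := by
  rcases le_total p (2 * m) with h | h
  · -- discard the nonnegative middle term `C(p, m) t^m`
    exact (binomRemainder_succ_left_le (by linarith) ht.le).trans
      (binomRemainder_nonpos (by linarith) (by linarith) ht)
  · exact binomRemainder_nonpos (by push_cast; linarith) (by push_cast; linarith) ht

theorem rpow_add_sub_binomSymmSum (n : ℕ) (p : ℝ) {x y : ℝ} (hx : 0 ≤ x) (hy : 0 < y) :
    (x + y) ^ p - binomSymmSum n p x y = y ^ p * binomRemainder n n p (x / y) := by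
  obtain ⟨t, ht, rfl⟩ : ∃ t, 0 ≤ t ∧ x = t * y := ⟨x / y, div_nonneg hx hy.le, by field_simp⟩
  rw [mul_div_cancel_right₀ t hy.ne']
  have hscale (c : ℝ) : (t * y) ^ c * y ^ (p - c) = y ^ p * t ^ c := by
    rw [mul_rpow ht hy.le, mul_assoc, ← rpow_add hy, add_sub_cancel, mul_comm]
  have hbase : (t * y + y) ^ p = y ^ p * (1 + t) ^ p := by
    rw [← mul_rpow hy.le (by positivity)]
    ring_nf
  have hsum : binomSymmSum n p (t * y) y = y ^ p * binomHead n p t + y ^ p * binomTail n p t := by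
    rw [binomSymmSum, binomHead, binomTail, mul_sum, mul_sum, ← sum_add_distrib]
    refine sum_congr rfl fun k _ => ?_
    have hscale' : (t * y) ^ (p - k) * y ^ (k : ℝ) = y ^ p * t ^ (p - k) := by
      simpa using hscale (p - k)
    rw [hscale, hscale', rpow_natCast]
    ring
  rw [binomRemainder, hsum, hbase]
  ring

theorem continuous_binomSymmSum {n : ℕ} {p : ℝ} (hn : (n : ℝ) ≤ p + 1) :
    Continuous fun z : ℝ × ℝ => binomSymmSum n p z.1 z.2 := by
  refine continuous_finsetSum _ fun k hk => ?_
  have hk : (k : ℝ) + 1 ≤ n := by exact_mod_cast mem_range.1 hk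
  have hk₀ : (0 : ℝ) ≤ k := k.cast_nonneg
  have hpk : 0 ≤ p - k := by linarith
  fun_prop (disch := assumption)

theorem le_of_forall_pos_of_continuous {f g : ℝ × ℝ → ℝ} (hf : Continuous f) (hg : Continuous g)
    (h : ∀ x > 0, ∀ y > 0, f (x, y) ≤ g (x, y)) {x y : ℝ} (hx : 0 ≤ x) (hy : 0 ≤ y) :
    f (x, y) ≤ g (x, y) := by
  have hmem : (x, y) ∈ closure (Set.Ioi (0 : ℝ) ×ˢ Set.Ioi 0) := by
    rw [closure_prod_eq, closure_Ioi]
    exact ⟨hx, hy⟩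
  exact closure_minimal (fun z hz => h z.1 hz.1 z.2 hz.2) (isClosed_le hf hg) hmem

theorem binomSymmSum_le_rpow_add {m : ℕ} {p x y : ℝ} (hp : 0 ≤ p) (hm : 2 * (m : ℝ) - 1 ≤ p)
    (hx : 0 ≤ x) (hy : 0 ≤ y) : binomSymmSum m p x y ≤ (x + y) ^ p := by
  refine le_of_forall_pos_of_continuous (f := fun z => binomSymmSum m p z.1 z.2)
    (g := fun z => (z.1 + z.2) ^ p) (continuous_binomSymmSum (by linarith))
    (by fun_prop (disch := assumption)) (fun u hu v hv => ?_) hx hy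
  have := mul_nonneg (rpow_nonneg hv.le p)
    (binomRemainder_nonneg (a := m) (b := m) (q := p) (by linarith) (div_pos hu hv))
  rw [← rpow_add_sub_binomSymmSum m p hu.le hv] at this
  exact sub_nonneg.1 this

theorem rpow_add_le_binomSymmSum {m : ℕ} {p x y : ℝ} (hp : 1 ≤ p) (h₁ : 2 * (m : ℝ) - 1 ≤ p)
    (h₂ : p ≤ 2 * m + 1) (hx : 0 ≤ x) (hy : 0 ≤ y) : (x + y) ^ p ≤ binomSymmSum (m + 1) p x y := by
  have hp₀ : 0 ≤ p := by linarith
  refine le_of_forall_pos_of_continuous (f := fun z => (z.1 + z.2) ^ p)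
    (g := fun z => binomSymmSum (m + 1) p z.1 z.2) (by fun_prop (disch := assumption))
    (continuous_binomSymmSum (by push_cast; linarith)) (fun u hu v hv => ?_) hx hy
  have := mul_nonpos_of_nonneg_of_nonpos (rpow_nonneg hv.le p)
    (binomRemainder_succ_succ_nonpos h₁ h₂ (div_pos hu hv))
  rw [← rpow_add_sub_binomSymmSum (m + 1) p hu.le hv] at this
  exact sub_nonpos.1 this

theorem stmt_0 (p : ℝ) (hp : 1 ≤ p) (x y : ℝ) (hx : 0 ≤ x) (hy : 0 ≤ y) :
    (∑ k ∈ Finset.range ⌊(p + 1) / 2⌋₊,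
        Real.Gamma (p + 1) / (Real.Gamma ((k : ℝ) + 1) * Real.Gamma (p + 1 - (k : ℝ))) *
          (x ^ (k : ℝ) * y ^ (p - (k : ℝ)) + x ^ (p - (k : ℝ)) * y ^ (k : ℝ)))
        ≤ (x + y) ^ p ∧
      (x + y) ^ p ≤
        ∑ k ∈ Finset.range (⌊(p + 1) / 2⌋₊ + 1),
          Real.Gamma (p + 1) / (Real.Gamma ((k : ℝ) + 1) * Real.Gamma (p + 1 - (k : ℝ))) *
            (x ^ (k : ℝ) * y ^ (p - (k : ℝ)) + x ^ (p - (k : ℝ)) * y ^ (k : ℝ)) := by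
  set m := ⌊(p + 1) / 2⌋₊
  have hm₁ : (m : ℝ) ≤ (p + 1) / 2 := Nat.floor_le (by linarith)
  have hm₂ : (p + 1) / 2 < m + 1 := Nat.lt_floor_add_one _
  have hcoeff (n : ℕ) (hn : n ≤ m + 1) :
      ∑ k ∈ range n, Gamma (p + 1) / (Gamma ((k : ℝ) + 1) * Gamma (p + 1 - (k : ℝ))) *
        (x ^ (k : ℝ) * y ^ (p - (k : ℝ)) + x ^ (p - (k : ℝ)) * y ^ (k : ℝ)) =
        binomSymmSum n p x y :=
    sum_congr rfl fun k hk => by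
      have : (k : ℝ) + 1 ≤ m + 1 := by exact_mod_cast (mem_range.1 hk).trans_le hn
      rw [Gamma_div_Gamma_mul_Gamma_eq_choose (by linarith)]
  rw [hcoeff m m.le_succ, hcoeff (m + 1) le_rfl]
  exact ⟨binomSymmSum_le_rpow_add (by linarith) (by linarith) hx hy,
    rpow_add_le_binomSymmSum hp (by linarith) (by linarith) hx hy⟩
end

section
/- Let δ₂ > 0 and a, b ≥ 0 with a + b = 3/2 + δ₂. Then there exists a constant C > 0 such that for all families of nonnegative reals (A_p)_{p∈ℤ³}, (B_p)_{p∈ℤ³}, (C_p)_{p∈ℤ³}, one has Σ_{k∈ℤ³} Σ_{p∈ℤ³} A_p B_{k−p} C_k ≤ C (Σ_p |p|^{2a} A_p²)^{1/2} (Σ_p |p|^{2b} B_p²)^{1/2} (Σ_p C_p²)^{1/2}, where by convention |p|^{2a} is interpreted with |0|^{2a} replaced by 1 (equivalently, using ⟨p⟩ = (1+|p|²)^{1/2} in place of |p|). -/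
/-!
Put `w p = 1 + |p|²` and split `A p * B (k - p) = κ k p * (w p ^ (a/2) * A p) * (w (k-p) ^ (b/2) * B (k-p))`
with kernel `κ k p = w p ^ (-a/2) * w (k-p) ^ (-b/2)`. Cauchy–Schwarz in `p` and then in `k` bound the
trilinear sum by `sup_k (∑_p κ k p ²) ^ (1/2)` times the three norms, because summing the squared
convolution over `k` factorizes into the product of the two weighted norms. Whichever of `w p`,
`w (k - p)` is smaller absorbs both exponents, so `∑_p κ k p ² ≤ 2 ∑_p w p ^ (-(a+b))` uniformly in `k`
(this replaces the usual split into frequency regions), and that lattice sum is finite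
since `a + b > 3/2`: it is dominated by the cube of the one-dimensional sum `∑_n (1 + n²) ^ (-(a+b)/3)`.
-/

open scoped ENNReal

namespace ENNReal

theorem inner_le_Lp_mul_Lq_tsum {ι : Type*} {p q : ℝ} (hpq : p.HolderConjugate q)
    (f g : ι → ℝ≥0∞) :
    ∑' i, f i * g i ≤ (∑' i, f i ^ p) ^ (1 / p) * (∑' i, g i ^ q) ^ (1 / q) := by
  let _ : MeasurableSpace ι := ⊤
  have : MeasurableSingletonClass ι := ⟨fun _ => trivial⟩
  simpa [MeasureTheory.lintegral_count] using lintegral_mul_le_Lp_mul_Lq MeasureTheory.Measure.count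
    hpq (measurable_from_top (f := f)).aemeasurable (measurable_from_top (f := g)).aemeasurable

theorem tsum_mul_le_sqrt_mul_sqrt {ι : Type*} (f g : ι → ℝ≥0∞) :
    ∑' i, f i * g i ≤ (∑' i, f i ^ 2) ^ (1 / 2 : ℝ) * (∑' i, g i ^ 2) ^ (1 / 2 : ℝ) := by
  simpa only [ENNReal.rpow_two] using inner_le_Lp_mul_Lq_tsum Real.HolderConjugate.two_two f g

theorem tsum_tsum_mul_sub {Γ : Type*} [AddGroup Γ] (f g : Γ → ℝ≥0∞) :
    ∑' k, ∑' p, f p * g (k - p) = (∑' p, f p) * ∑' q, g q := by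
  rw [ENNReal.tsum_comm, ← ENNReal.tsum_mul_right]
  refine tsum_congr fun p => ?_
  rw [ENNReal.tsum_mul_left, ← (Equiv.subRight p).tsum_eq g]; rfl

theorem tsum_pi_prod_eq_pow {α : Type*} (f : α → ℝ≥0∞) (n : ℕ) :
    ∑' x : Fin n → α, ∏ i, f (x i) = (∑' a, f a) ^ n := by
  induction n with
  | zero => simp
  | succ n ih =>
    rw [← (Fin.consEquiv fun _ => α).tsum_eq, ENNReal.tsum_prod', pow_succ', ← ih,
      ← ENNReal.tsum_mul_right]
    refine tsum_congr fun a => ?_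
    rw [← ENNReal.tsum_mul_left]
    refine tsum_congr fun x => ?_
    simp [Fin.consEquiv, Fin.prod_univ_succ]

theorem rpow_one_half_sq (x : ℝ≥0∞) : (x ^ (1 / 2 : ℝ)) ^ 2 = x := by
  rw [← ENNReal.rpow_natCast, ← ENNReal.rpow_mul]; norm_num

end ENNReal

section KernelConvolution

variable {Γ : Type*} [AddGroup Γ] (κ : Γ → Γ → ℝ≥0∞) {M : ℝ≥0∞}

theorem tsum_sq_tsum_kernel_mul_le (hκ : ∀ k, ∑' p, κ k p ^ 2 ≤ M) (f g : Γ → ℝ≥0∞) :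
    ∑' k, (∑' p, κ k p * (f p * g (k - p))) ^ 2 ≤ M * ((∑' p, f p ^ 2) * ∑' q, g q ^ 2) := by
  have inner (k : Γ) :
      (∑' p, κ k p * (f p * g (k - p))) ^ 2 ≤ M * ∑' p, f p ^ 2 * g (k - p) ^ 2 := by
    calc (∑' p, κ k p * (f p * g (k - p))) ^ 2
        ≤ ((∑' p, κ k p ^ 2) ^ (1 / 2 : ℝ) * (∑' p, (f p * g (k - p)) ^ 2) ^ (1 / 2 : ℝ)) ^ 2 := by
          gcongr; exact ENNReal.tsum_mul_le_sqrt_mul_sqrt _ _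
      _ = (∑' p, κ k p ^ 2) * ∑' p, f p ^ 2 * g (k - p) ^ 2 := by
          simp only [mul_pow, ENNReal.rpow_one_half_sq]
      _ ≤ M * ∑' p, f p ^ 2 * g (k - p) ^ 2 := by gcongr; exact hκ k
  calc ∑' k, (∑' p, κ k p * (f p * g (k - p))) ^ 2
      ≤ ∑' k, M * ∑' p, f p ^ 2 * g (k - p) ^ 2 := ENNReal.tsum_le_tsum inner
    _ = M * ((∑' p, f p ^ 2) * ∑' q, g q ^ 2) := by
        rw [ENNReal.tsum_mul_left, ENNReal.tsum_tsum_mul_sub (f · ^ 2) (g · ^ 2)]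

theorem tsum_tsum_kernel_mul_le (hκ : ∀ k, ∑' p, κ k p ^ 2 ≤ M) (f g h : Γ → ℝ≥0∞) :
    ∑' k, ∑' p, κ k p * f p * g (k - p) * h k ≤
      M ^ (1 / 2 : ℝ) * (∑' p, f p ^ 2) ^ (1 / 2 : ℝ) * (∑' p, g p ^ 2) ^ (1 / 2 : ℝ) *
        (∑' p, h p ^ 2) ^ (1 / 2 : ℝ) := by
  have half : (0 : ℝ) ≤ 1 / 2 := by norm_num
  calc ∑' k, ∑' p, κ k p * f p * g (k - p) * h k
      = ∑' k, (∑' p, κ k p * (f p * g (k - p))) * h k := by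
        simp only [← ENNReal.tsum_mul_right, mul_assoc]
    _ ≤ (∑' k, (∑' p, κ k p * (f p * g (k - p))) ^ 2) ^ (1 / 2 : ℝ) *
          (∑' k, h k ^ 2) ^ (1 / 2 : ℝ) := ENNReal.tsum_mul_le_sqrt_mul_sqrt _ _
    _ ≤ (M * ((∑' p, f p ^ 2) * ∑' q, g q ^ 2)) ^ (1 / 2 : ℝ) * (∑' k, h k ^ 2) ^ (1 / 2 : ℝ) := by
        gcongr; exact tsum_sq_tsum_kernel_mul_le κ hκ f g
    _ = _ := by
        rw [ENNReal.mul_rpow_of_nonneg _ _ half, ENNReal.mul_rpow_of_nonneg _ _ half]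
        ring

end KernelConvolution

theorem Real.rpow_neg_mul_rpow_neg_le_add {a b u v : ℝ} (ha : 0 ≤ a) (hb : 0 ≤ b) (hu : 1 ≤ u)
    (hv : 1 ≤ v) : u ^ (-a) * v ^ (-b) ≤ u ^ (-(a + b)) + v ^ (-(a + b)) := by
  have hu0 : 0 < u := one_pos.trans_le hu
  have hv0 : 0 < v := one_pos.trans_le hv
  rcases le_total u v with huv | hvu
  · calc u ^ (-a) * v ^ (-b) ≤ u ^ (-a) * u ^ (-b) :=
          mul_le_mul_of_nonneg_left (Real.rpow_le_rpow_of_nonpos hu0 huv (neg_nonpos.2 hb))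
            (by positivity)
      _ = u ^ (-(a + b)) := by rw [← Real.rpow_add hu0, neg_add]
      _ ≤ _ := le_add_of_nonneg_right (by positivity)
  · calc u ^ (-a) * v ^ (-b) ≤ v ^ (-a) * v ^ (-b) :=
          mul_le_mul_of_nonneg_right (Real.rpow_le_rpow_of_nonpos hv0 hvu (neg_nonpos.2 ha))
            (by positivity)
      _ = v ^ (-(a + b)) := by rw [← Real.rpow_add hv0, neg_add]
      _ ≤ _ := le_add_of_nonneg_left (by positivity)

theorem ENNReal.ofReal_rpow_half_mul_sq {x y : ℝ} (hx : 0 ≤ x) (hy : 0 ≤ y) (c : ℝ) :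
    ENNReal.ofReal (x ^ (c / 2) * y) ^ 2 = ENNReal.ofReal (x ^ c * y ^ 2) := by
  rw [← ENNReal.ofReal_pow (by positivity), mul_pow, ← Real.rpow_mul_natCast hx]
  norm_num

section WeightedConvolution

variable {Γ : Type*} [AddGroup Γ] {w : Γ → ℝ} {a b : ℝ}

theorem tsum_weight_kernel_sq_le (hw : ∀ p, 1 ≤ w p) (ha : 0 ≤ a) (hb : 0 ≤ b) (k : Γ) :
    ∑' p, ENNReal.ofReal (w p ^ (-a / 2) * w (k - p) ^ (-b / 2)) ^ 2 ≤
      2 * ∑' p, ENNReal.ofReal (w p ^ (-(a + b))) := by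
  have hw0 (p : Γ) : 0 ≤ w p := zero_le_one.trans (hw p)
  calc ∑' p, ENNReal.ofReal (w p ^ (-a / 2) * w (k - p) ^ (-b / 2)) ^ 2
      = ∑' p, ENNReal.ofReal (w p ^ (-a) * w (k - p) ^ (-b)) := by
        refine tsum_congr fun p => ?_
        rw [ENNReal.ofReal_rpow_half_mul_sq (hw0 p) (Real.rpow_nonneg (hw0 _) _),
          ← Real.rpow_mul_natCast (hw0 _)]
        norm_num
    _ ≤ ∑' p, (ENNReal.ofReal (w p ^ (-(a + b))) + ENNReal.ofReal (w (k - p) ^ (-(a + b)))) := by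
        refine ENNReal.tsum_le_tsum fun p => ?_
        rw [← ENNReal.ofReal_add (Real.rpow_nonneg (hw0 _) _) (Real.rpow_nonneg (hw0 _) _)]
        exact ENNReal.ofReal_le_ofReal
          (Real.rpow_neg_mul_rpow_neg_le_add ha hb (hw p) (hw (k - p)))
    _ = 2 * ∑' p, ENNReal.ofReal (w p ^ (-(a + b))) := by
        rw [ENNReal.tsum_add, two_mul, ← (Equiv.subLeft k).tsum_eq]
        rfl

theorem tsum_tsum_weighted_conv_le (hw : ∀ p, 1 ≤ w p) (ha : 0 ≤ a) (hb : 0 ≤ b) {A B G : Γ → ℝ}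
    (hA : ∀ p, 0 ≤ A p) (hB : ∀ p, 0 ≤ B p) (hG : ∀ p, 0 ≤ G p) :
    ∑' k, ∑' p, ENNReal.ofReal (A p * B (k - p) * G k) ≤
      (2 * ∑' p, ENNReal.ofReal (w p ^ (-(a + b)))) ^ (1 / 2 : ℝ) *
        (∑' p, ENNReal.ofReal (w p ^ a * A p ^ 2)) ^ (1 / 2 : ℝ) *
        (∑' p, ENNReal.ofReal (w p ^ b * B p ^ 2)) ^ (1 / 2 : ℝ) *
        (∑' p, ENNReal.ofReal (G p ^ 2)) ^ (1 / 2 : ℝ) := by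
  have hw0 (p : Γ) : 0 < w p := one_pos.trans_le (hw p)
  have cancel (p : Γ) (c : ℝ) : w p ^ (-c / 2) * w p ^ (c / 2) = 1 := by
    rw [← Real.rpow_add (hw0 p), neg_div, neg_add_cancel, Real.rpow_zero]
  have factor (k p : Γ) : ENNReal.ofReal (A p * B (k - p) * G k) =
      ENNReal.ofReal (w p ^ (-a / 2) * w (k - p) ^ (-b / 2)) *
        ENNReal.ofReal (w p ^ (a / 2) * A p) * ENNReal.ofReal (w (k - p) ^ (b / 2) * B (k - p)) *
        ENNReal.ofReal (G k) := by
    have := (hw0 p).le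
    have := (hw0 (k - p)).le
    have := hA p
    have := hB (k - p)
    rw [← ENNReal.ofReal_mul (by positivity), ← ENNReal.ofReal_mul (by positivity),
      ← ENNReal.ofReal_mul (by positivity)]
    congr 1
    linear_combination -(A p * B (k - p) * G k) * cancel p a -
      (A p * B (k - p) * G k * (w p ^ (-a / 2) * w p ^ (a / 2))) * cancel (k - p) b
  simp only [factor]
  refine (tsum_tsum_kernel_mul_le _ (tsum_weight_kernel_sq_le hw ha hb)
    (fun p => ENNReal.ofReal (w p ^ (a / 2) * A p)) (fun p => ENNReal.ofReal (w p ^ (b / 2) * B p))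
    (fun p => ENNReal.ofReal (G p))).trans_eq ?_
  simp only [ENNReal.ofReal_rpow_half_mul_sq (hw0 _).le (hA _),
    ENNReal.ofReal_rpow_half_mul_sq (hw0 _).le (hB _), ← ENNReal.ofReal_pow (hG _)]

end WeightedConvolution

theorem Int.summable_one_add_sq_rpow_neg {t : ℝ} (ht : 1 / 2 < t) :
    Summable fun n : ℤ => (1 + (n : ℝ) ^ 2) ^ (-t) := by
  refine (Real.summable_abs_int_rpow (b := 2 * t) (by linarith)).of_norm_bounded_eventually ?_
  filter_upwards [(Set.finite_singleton (0 : ℤ)).compl_mem_cofinite] with n hn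
  have hn2 : 0 < (n : ℝ) ^ 2 := by
    have : (n : ℝ) ≠ 0 := by simpa using hn
    positivity
  rw [Real.norm_of_nonneg (by positivity)]
  calc (1 + (n : ℝ) ^ 2) ^ (-t) ≤ ((n : ℝ) ^ 2) ^ (-t) :=
        Real.rpow_le_rpow_of_nonpos hn2 (by linarith) (by linarith)
    _ = |(n : ℝ)| ^ (-(2 * t)) := by
        rw [← sq_abs, ← Real.rpow_natCast_mul (abs_nonneg _)]
        push_cast; ring_nf

theorem tsum_ofReal_one_add_sum_sq_rpow_neg_ne_top (d : ℕ) {t : ℝ} (ht : 1 / 2 < t) :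
    ∑' p : Fin d → ℤ, ENNReal.ofReal ((1 + ∑ i, (p i : ℝ) ^ 2) ^ (-(d * t))) ≠ ⊤ := by
  have coord_le (p : Fin d → ℤ) (i : Fin d) : 1 + (p i : ℝ) ^ 2 ≤ 1 + ∑ j, (p j : ℝ) ^ 2 := by
    gcongr
    exact Finset.single_le_sum (f := fun j => (p j : ℝ) ^ 2) (fun _ _ => by positivity)
      (Finset.mem_univ i)
  have pointwise (p : Fin d → ℤ) : ENNReal.ofReal ((1 + ∑ i, (p i : ℝ) ^ 2) ^ (-(d * t))) ≤
      ∏ i, ENNReal.ofReal ((1 + (p i : ℝ) ^ 2) ^ (-t)) := by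
    rw [← ENNReal.ofReal_prod_of_nonneg (fun _ _ => by positivity),
      Real.finsetProd_rpow _ _ (fun _ _ => by positivity), neg_mul_eq_mul_neg,
      Real.rpow_natCast_mul (by positivity)]
    refine ENNReal.ofReal_le_ofReal (Real.rpow_le_rpow_of_nonpos (by positivity) ?_ (by linarith))
    calc ∏ i, (1 + (p i : ℝ) ^ 2) ≤ ∏ _i : Fin d, (1 + ∑ j, (p j : ℝ) ^ 2) :=
          Finset.prod_le_prod (fun _ _ => by positivity) (fun i _ => coord_le p i)
      _ = (1 + ∑ j, (p j : ℝ) ^ 2) ^ d := by simp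
  have one_dim : ∑' n : ℤ, ENNReal.ofReal ((1 + (n : ℝ) ^ 2) ^ (-t)) ≠ ⊤ :=
    (Int.summable_one_add_sq_rpow_neg ht).tsum_ofReal_ne_top
  refine ne_top_of_le_ne_top (ENNReal.pow_ne_top (n := d) one_dim) ?_
  rw [← ENNReal.tsum_pi_prod_eq_pow]
  exact ENNReal.tsum_le_tsum pointwise

theorem stmt_4 (δ₂ a b : ℝ) (hδ : 0 < δ₂) (ha : 0 ≤ a) (hb : 0 ≤ b)
    (hab : a + b = 3 / 2 + δ₂) :
    ∃ C : ℝ, 0 < C ∧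
      ∀ A B G : (Fin 3 → ℤ) → ℝ,
        (∀ p, 0 ≤ A p) → (∀ p, 0 ≤ B p) → (∀ p, 0 ≤ G p) →
        (∑' k : Fin 3 → ℤ, ∑' p : Fin 3 → ℤ, ENNReal.ofReal (A p * B (k - p) * G k)) ≤
          ENNReal.ofReal C *
            (∑' p : Fin 3 → ℤ,
              ENNReal.ofReal ((1 + ∑ i, ((p i : ℝ)) ^ 2) ^ a * A p ^ 2)) ^ ((1:ℝ)/2) *
            (∑' p : Fin 3 → ℤ,
              ENNReal.ofReal ((1 + ∑ i, ((p i : ℝ)) ^ 2) ^ b * B p ^ 2)) ^ ((1:ℝ)/2) *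
            (∑' p : Fin 3 → ℤ, ENNReal.ofReal (G p ^ 2)) ^ ((1:ℝ)/2) := by
  have hw (p : Fin 3 → ℤ) : 1 ≤ 1 + ∑ i, (p i : ℝ) ^ 2 := le_add_of_nonneg_right (by positivity)
  have hS : ∑' p : Fin 3 → ℤ, ENNReal.ofReal ((1 + ∑ i, (p i : ℝ) ^ 2) ^ (-(a + b))) ≠ ⊤ := by
    have h := tsum_ofReal_one_add_sum_sq_rpow_neg_ne_top 3 (t := (a + b) / 3) (by linarith)
    rwa [show ((3 : ℕ) : ℝ) * ((a + b) / 3) = a + b by push_cast; ring] at h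
  set K := (2 * ∑' p : Fin 3 → ℤ, ENNReal.ofReal ((1 + ∑ i, (p i : ℝ) ^ 2) ^ (-(a + b)))) ^
    (1 / 2 : ℝ)
  have hK : K ≠ ⊤ := ENNReal.rpow_ne_top_of_nonneg (by norm_num) (ENNReal.mul_ne_top (by norm_num) hS)
  refine ⟨K.toReal + 1, by positivity, fun A B G hA hB hG => ?_⟩
  refine (tsum_tsum_weighted_conv_le hw ha hb hA hB hG).trans ?_
  gcongr
  calc K = ENNReal.ofReal K.toReal := (ENNReal.ofReal_toReal hK).symm
    _ ≤ ENNReal.ofReal (K.toReal + 1) := ENNReal.ofReal_le_ofReal (by linarith)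
end

section
/- Let l ∈ ℝ, l ≥ 0. There exists a constant C_l such that for all v, v', v_* ∈ ℝ³ arising from a Boltzmann collision with deviation angle θ ∈ [0, π/2] (i.e. v' = (v+v_*)/2 + (|v−v_*|/2)σ with cosθ = ((v−v_*)/|v−v_*|)·σ), one has ⟨v'⟩^l ≤ C_l ( (1 + θ^l) ⟨v⟩^l + ⟨v_*⟩^l ), where ⟨v⟩ = (1+|v|²)^{1/2}. In particular ⟨v'⟩^l ≤ C_l (⟨v⟩^l + |v'−v|^l) and |v'−v| ≤ |v−v_*| sin(θ/2) ≤ θ(⟨v⟩ + ⟨v_*⟩) up to constants. -/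
/-!
Since `v' - v = (|v - v_*| / 2) σ - (v - v_*) / 2`, expanding the square with
`(v - v_*) · σ = |v - v_*| cos θ` gives `|v' - v| = |v - v_*| sin (θ / 2) ≤ (|v| + |v_*|) θ`.
The triangle inequality bounds `|v'|` both by `|v| + |v_*|` and by `|v| + |v' - v|`; these pass to
brackets since `√(1 + c²) ≤ √(1 + a²) + b` for `0 ≤ c ≤ a + b`, and the powers split by
`(y + z)^l ≤ 2^l (y^l + z^l)`, so `C_l = 2^l` works.
-/

open Real
open scoped RealInnerProductSpace

noncomputable section

namespace Real

theorem add_rpow_le_two_rpow_mul_add_rpow {l y z : ℝ} (hl : 0 ≤ l) (hy : 0 ≤ y) (hz : 0 ≤ z) :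
    (y + z) ^ l ≤ 2 ^ l * (y ^ l + z ^ l) := by
  have hmax : max y z ^ l ≤ y ^ l + z ^ l := by
    rcases max_choice y z with h | h <;> rw [h]
    · linarith [rpow_nonneg hz l]
    · linarith [rpow_nonneg hy l]
  calc (y + z) ^ l ≤ (2 * max y z) ^ l :=
        rpow_le_rpow (by positivity) (by linarith [le_max_left y z, le_max_right y z]) hl
    _ = 2 ^ l * max y z ^ l := mul_rpow zero_le_two (le_max_of_le_left hy)
    _ ≤ 2 ^ l * (y ^ l + z ^ l) := by gcongr

theorem sqrt_one_add_sq_le_add {a b c : ℝ} (ha : 0 ≤ a) (hb : 0 ≤ b) (hc : 0 ≤ c)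
    (hcab : c ≤ a + b) : √(1 + c ^ 2) ≤ √(1 + a ^ 2) + b := by
  have ha_le : a ≤ √(1 + a ^ 2) := le_sqrt_of_sq_le (by linarith)
  rw [sqrt_le_left (by positivity)]
  nlinarith [sq_sqrt (show (0 : ℝ) ≤ 1 + a ^ 2 by positivity)]

end Real

section Collision

variable {E : Type*} [NormedAddCommGroup E] [InnerProductSpace ℝ E]

def postCollisionVelocity (v vs σ : E) : E :=
  (2 : ℝ)⁻¹ • (v + vs) + (‖v - vs‖ / 2) • σ

theorem inner_eq_norm_mul_cos_of_cos_eq {x y : E} {θ : ℝ} (hcos : cos θ = ⟪‖x‖⁻¹ • x, y⟫) :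
    ⟪x, y⟫ = ‖x‖ * cos θ := by
  rcases eq_or_ne x 0 with rfl | hx
  · simp
  · rw [hcos, real_inner_smul_left, ← mul_assoc, mul_inv_cancel₀ (norm_ne_zero_iff.mpr hx),
      one_mul]

theorem norm_postCollisionVelocity_le (v vs : E) {σ : E} (hσ : ‖σ‖ = 1) :
    ‖postCollisionVelocity v vs σ‖ ≤ ‖v‖ + ‖vs‖ := by
  calc ‖postCollisionVelocity v vs σ‖ ≤ ‖(2 : ℝ)⁻¹ • (v + vs)‖ + ‖(‖v - vs‖ / 2) • σ‖ :=
        norm_add_le _ _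
    _ = (‖v + vs‖ + ‖v - vs‖) / 2 := by
        rw [norm_smul, norm_smul, hσ, norm_inv, norm_two, norm_div, norm_two, norm_norm]
        ring
    _ ≤ ‖v‖ + ‖vs‖ := by linarith [norm_add_le v vs, norm_sub_le v vs]

theorem norm_postCollisionVelocity_sub_self {v vs σ : E} {θ : ℝ} (hσ : ‖σ‖ = 1)
    (hθ₀ : 0 ≤ θ) (hθ : θ ≤ 2 * π) (hcos : cos θ = ⟪‖v - vs‖⁻¹ • (v - vs), σ⟫) :
    ‖postCollisionVelocity v vs σ - v‖ = ‖v - vs‖ * sin (θ / 2) := by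
  have hdiff : postCollisionVelocity v vs σ - v = (‖v - vs‖ / 2) • σ - (2 : ℝ)⁻¹ • (v - vs) := by
    unfold postCollisionVelocity
    module
  have hsq : ‖postCollisionVelocity v vs σ - v‖ ^ 2 = ‖v - vs‖ ^ 2 * ((1 - cos θ) / 2) := by
    rw [hdiff, norm_sub_sq_real, norm_smul, norm_smul, hσ, real_inner_smul_left,
      real_inner_smul_right, real_inner_comm, inner_eq_norm_mul_cos_of_cos_eq hcos, norm_inv,
      norm_two, norm_div, norm_two, norm_norm]
    ring
  rw [← sqrt_sq (norm_nonneg _), hsq, sqrt_mul (sq_nonneg _), sqrt_sq (norm_nonneg _),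
    sin_half_eq_sqrt hθ₀ hθ]

end Collision

theorem stmt_7 (l : ℝ) (hl : 0 ≤ l) :
    ∃ Cl : ℝ, 0 < Cl ∧
      ∀ (v vs σ : EuclideanSpace ℝ (Fin 3)) (θ : ℝ),
        ‖σ‖ = 1 → v ≠ vs → θ ∈ Set.Icc (0:ℝ) (Real.pi / 2) →
        Real.cos θ = (inner ℝ (‖v - vs‖⁻¹ • (v - vs)) σ : ℝ) →
        ∀ v' : EuclideanSpace ℝ (Fin 3),
          v' = (2:ℝ)⁻¹ • (v + vs) + (‖v - vs‖ / 2) • σ →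
          Real.sqrt (1 + ‖v'‖ ^ 2) ^ l ≤
              Cl * ((1 + θ ^ l) * Real.sqrt (1 + ‖v‖ ^ 2) ^ l + Real.sqrt (1 + ‖vs‖ ^ 2) ^ l) ∧
            Real.sqrt (1 + ‖v'‖ ^ 2) ^ l ≤
              Cl * (Real.sqrt (1 + ‖v‖ ^ 2) ^ l + ‖v' - v‖ ^ l) ∧
            ‖v' - v‖ ≤ ‖v - vs‖ * Real.sin (θ / 2) ∧
            ‖v - vs‖ * Real.sin (θ / 2) ≤
              Cl * (θ * (Real.sqrt (1 + ‖v‖ ^ 2) + Real.sqrt (1 + ‖vs‖ ^ 2))) := by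
  refine ⟨2 ^ l, by positivity, fun v vs σ θ hσ _ ⟨hθ₀, hθ⟩ hcos v' hv' => ?_⟩
  replace hv' : v' = postCollisionVelocity v vs σ := hv'
  have hd : ‖v' - v‖ = ‖v - vs‖ * sin (θ / 2) :=
    hv' ▸ norm_postCollisionVelocity_sub_self hσ hθ₀ (by linarith [pi_pos]) hcos
  have hv_le : ‖v‖ ≤ √(1 + ‖v‖ ^ 2) := le_sqrt_of_sq_le (by linarith)
  have hvs_le : ‖vs‖ ≤ √(1 + ‖vs‖ ^ 2) := le_sqrt_of_sq_le (by linarith)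
  have h_energy : √(1 + ‖v'‖ ^ 2) ≤ √(1 + ‖v‖ ^ 2) + √(1 + ‖vs‖ ^ 2) :=
    (sqrt_one_add_sq_le_add (norm_nonneg _) (norm_nonneg _) (norm_nonneg _)
      (hv' ▸ norm_postCollisionVelocity_le v vs hσ)).trans (by linarith)
  have h_jump : √(1 + ‖v'‖ ^ 2) ≤ √(1 + ‖v‖ ^ 2) + ‖v' - v‖ :=
    sqrt_one_add_sq_le_add (norm_nonneg _) (norm_nonneg _) (norm_nonneg _) (norm_le_insert' v' v)
  refine ⟨?_, ?_, hd.le, ?_⟩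
  · calc √(1 + ‖v'‖ ^ 2) ^ l ≤ 2 ^ l * (√(1 + ‖v‖ ^ 2) ^ l + √(1 + ‖vs‖ ^ 2) ^ l) :=
          (rpow_le_rpow (by positivity) h_energy hl).trans
            (add_rpow_le_two_rpow_mul_add_rpow hl (by positivity) (by positivity))
      _ ≤ _ := by
          gcongr
          exact le_mul_of_one_le_left (by positivity) (le_add_of_nonneg_right (by positivity))
  · exact (rpow_le_rpow (by positivity) h_jump hl).trans
      (add_rpow_le_two_rpow_mul_add_rpow hl (by positivity) (norm_nonneg _))
  · calc ‖v - vs‖ * sin (θ / 2) ≤ (‖v‖ + ‖vs‖) * θ :=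
          mul_le_mul (norm_sub_le v vs) ((sin_le (by linarith)).trans (by linarith))
            (sin_nonneg_of_nonneg_of_le_pi (by linarith) (by linarith [pi_pos])) (by positivity)
      _ ≤ θ * (√(1 + ‖v‖ ^ 2) + √(1 + ‖vs‖ ^ 2)) := by rw [mul_comm]; gcongr
      _ ≤ _ := le_mul_of_one_le_left (by positivity) (one_le_rpow one_le_two hl)
end
end

section
/- Let X : [0,∞) → [0,∞) be C¹ and satisfy the differential inequality X'(t) + A X(t)^{1+γ/l} ≤ B X(t) for all t > 0, where A, B > 0 and γ, l > 0. Then for all t > 0, X(t) ≤ ( 8B / (A (1 − e^{−B t γ / l})) )^{l/γ}. In particular X(t) is bounded for t ≥ t₀ > 0 by a constant depending only on A, B, γ, l, t₀ and not on X(0). -/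
/-!
With `κ = γ / l`, the Bernoulli substitution `Y = X ^ (-κ)` linearises the inequality: wherever
`X > 0` one has `Y' ≥ κ A - κ B Y`, so `Y` is bounded below by the solution of `y' = κ A - κ B y`
started from `y(0) = 0`, which is `(A / B) (1 - e^{-κ B t})`, whatever `Y(0) ≥ 0` is. Inverting
gives `X(t)^κ ≤ B / (A (1 - e^{-κ B t}))`, which is even better than the claim by a factor 8.
If instead `X` vanishes somewhere on `[0, t]`, then `X' ≤ B X` keeps it at zero up to time `t`.
-/

open Set Real

theorem exp_mul_sub_le_of_mul_sub_le_deriv {f f' : ℝ → ℝ} {k c a b : ℝ} (hab : a ≤ b)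
    (hf : ContinuousOn f (Icc a b)) (hf' : ∀ x ∈ Ioo a b, HasDerivAt f (f' x) x)
    (hle : ∀ x ∈ Ioo a b, k * (f x - c) ≤ f' x) :
    exp (k * (b - a)) * (f a - c) ≤ f b - c := by
  have hmono : MonotoneOn (fun x => exp (-(k * x)) * (f x - c)) (Icc a b) := by
    refine monotoneOn_of_hasDerivWithinAt_nonneg (convex_Icc a b) ?_ (f' :=
      fun x => exp (-(k * x)) * (f' x - k * (f x - c))) ?_ ?_
    · exact (continuous_exp.comp_continuousOn (by fun_prop)).mul (hf.sub continuousOn_const)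
    · intro x hx
      rw [interior_Icc] at hx
      have hexp : HasDerivAt (fun x => exp (-(k * x))) (exp (-(k * x)) * -(k * 1)) x :=
        ((hasDerivAt_id' x).const_mul k).neg.exp
      have hprod : HasDerivAt (fun x => exp (-(k * x)) * (f x - c))
          (exp (-(k * x)) * -(k * 1) * (f x - c) + exp (-(k * x)) * f' x) x :=
        hexp.mul ((hf' x hx).sub_const c)
      exact (hprod.congr_deriv (by ring)).hasDerivWithinAt
    · intro x hx
      rw [interior_Icc] at hx
      exact mul_nonneg (exp_pos _).le (sub_nonneg.2 (hle x hx))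
  have := hmono (left_mem_Icc.2 hab) (right_mem_Icc.2 hab) hab
  calc exp (k * (b - a)) * (f a - c)
      = exp (k * b) * (exp (-(k * a)) * (f a - c)) := by
        rw [← mul_assoc, ← exp_add]; ring_nf
    _ ≤ exp (k * b) * (exp (-(k * b)) * (f b - c)) := by gcongr
    _ = f b - c := by rw [← mul_assoc, ← exp_add, add_neg_cancel, exp_zero, one_mul]

theorem nonpos_of_deriv_le_mul {f f' : ℝ → ℝ} {k a b : ℝ} (hab : a ≤ b)
    (hf : ContinuousOn f (Icc a b)) (hf' : ∀ x ∈ Ioo a b, HasDerivAt f (f' x) x)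
    (hle : ∀ x ∈ Ioo a b, f' x ≤ k * f x) (ha : f a ≤ 0) : f b ≤ 0 := by
  have := exp_mul_sub_le_of_mul_sub_le_deriv (f := fun x => -f x) (f' := fun x => -f' x)
    (k := k) (c := 0) hab hf.neg (fun x hx => (hf' x hx).neg)
    (fun x hx => by linarith [hle x hx])
  nlinarith [exp_pos (k * (b - a))]

theorem hasDerivAt_deriv_of_contDiffOn_Ici {X : ℝ → ℝ} {a x : ℝ}
    (hX : ContDiffOn ℝ 1 X (Ici a)) (hx : a < x) : HasDerivAt X (deriv X x) x :=
  ((hX.differentiableOn one_ne_zero x hx.le).differentiableAt (Ici_mem_nhds hx)).hasDerivAt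

section BernoulliInequality

variable {X : ℝ → ℝ} {A B κ : ℝ}
  (hC1 : ContDiffOn ℝ 1 X (Ici 0))
  (hineq : ∀ t, 0 < t → deriv X t + A * X t ^ (1 + κ) ≤ B * X t)
include hC1 hineq

theorem le_rpow_neg_of_forall_pos (hB : B ≠ 0) (hκ : 0 ≤ κ) {t : ℝ} (ht : 0 < t)
    (hpos : ∀ s ∈ Icc 0 t, 0 < X s) :
    A / B * (1 - exp (-(κ * B * t))) ≤ X t ^ (-κ) := by
  have hY : ∀ s ∈ Ioo 0 t,
      HasDerivAt (fun s => X s ^ (-κ)) (-κ * X s ^ (-κ - 1) * deriv X s) s := fun s hs =>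
    (hasDerivAt_rpow_const (Or.inl (hpos s (Ioo_subset_Icc_self hs)).ne')).comp s
      (hasDerivAt_deriv_of_contDiffOn_Ici hC1 hs.1)
  have hYineq : ∀ s ∈ Ioo 0 t,
      -(κ * B) * (X s ^ (-κ) - A / B) ≤ -κ * X s ^ (-κ - 1) * deriv X s := by
    intro s hs
    have hXs := hpos s (Ioo_subset_Icc_self hs)
    have hXs_mul : X s ^ (-κ - 1) * X s = X s ^ (-κ) := by
      rw [← rpow_add_one hXs.ne']; ring_nf
    have hXs_cancel : X s ^ (-κ - 1) * X s ^ (1 + κ) = 1 := by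
      rw [← rpow_add hXs]; ring_nf; exact rpow_zero _
    have hderiv := hineq s hs.1
    have hw : 0 ≤ κ * X s ^ (-κ - 1) := mul_nonneg hκ (rpow_nonneg hXs.le _)
    have := mul_le_mul_of_nonneg_left hderiv hw
    rw [show -(κ * B) * (X s ^ (-κ) - A / B) = κ * A - κ * B * X s ^ (-κ) by field_simp; ring,
      ← hXs_mul]
    linear_combination this - κ * A * hXs_cancel
  have hcont : ContinuousOn (fun s => X s ^ (-κ)) (Icc 0 t) :=
    (hC1.continuousOn.mono Icc_subset_Ici_self).rpow_const fun s hs => Or.inl (hpos s hs).ne'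
  have hcmp := exp_mul_sub_le_of_mul_sub_le_deriv ht.le hcont hY hYineq
  have hY0 : 0 ≤ X 0 ^ (-κ) := rpow_nonneg (hpos 0 (left_mem_Icc.2 ht.le)).le _
  rw [sub_zero, neg_mul] at hcmp
  nlinarith [exp_pos (-(κ * B * t))]

theorem rpow_le_of_ode_ineq (hA : 0 < A) (hB : 0 < B) (hκ : 0 < κ)
    (hXnn : ∀ t, 0 ≤ t → 0 ≤ X t) {t : ℝ} (ht : 0 < t) :
    X t ^ κ ≤ B / (A * (1 - exp (-(κ * B * t)))) := by
  have hu : 0 < 1 - exp (-(κ * B * t)) := by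
    rw [sub_pos, exp_lt_one_iff, neg_lt_zero]; positivity
  by_cases hpos : ∀ s ∈ Icc 0 t, 0 < X s
  · have hlow := le_rpow_neg_of_forall_pos hC1 hineq hB.ne' hκ.le ht hpos
    rw [rpow_neg (hpos t (right_mem_Icc.2 ht.le)).le] at hlow
    calc X t ^ κ = ((X t ^ κ)⁻¹)⁻¹ := (inv_inv _).symm
      _ ≤ (A / B * (1 - exp (-(κ * B * t))))⁻¹ := inv_anti₀ (by positivity) hlow
      _ = B / (A * (1 - exp (-(κ * B * t)))) := by field_simp
  · push Not at hpos
    obtain ⟨s, ⟨hs, hst⟩, hXs⟩ := hpos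
    have hXt : X t ≤ 0 := by
      refine nonpos_of_deriv_le_mul (k := B) hst (hC1.continuousOn.mono fun x hx => hs.trans hx.1)
        (fun x hx => hasDerivAt_deriv_of_contDiffOn_Ici hC1 (hs.trans_lt hx.1))
        (fun x hx => ?_) hXs
      have hx : 0 < x := hs.trans_lt hx.1
      linarith [hineq x hx, mul_nonneg hA.le (rpow_nonneg (hXnn x hx.le) (1 + κ))]
    rw [le_antisymm hXt (hXnn t ht.le), zero_rpow hκ.ne']
    positivity

end BernoulliInequality

theorem stmt_10 (X : ℝ → ℝ) (A B γ l : ℝ)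
    (hA : 0 < A) (hB : 0 < B) (hγ : 0 < γ) (hl : 0 < l)
    (hXnn : ∀ t, 0 ≤ t → 0 ≤ X t)
    (hC1 : ContDiffOn ℝ 1 X (Set.Ici (0:ℝ)))
    (hineq : ∀ t, 0 < t → deriv X t + A * X t ^ (1 + γ / l) ≤ B * X t) :
    ∀ t, 0 < t → X t ≤ (8 * B / (A * (1 - Real.exp (-B * t * γ / l)))) ^ (l / γ) := by
  intro t ht
  have hκ : 0 < γ / l := div_pos hγ hl
  have hexp : -B * t * γ / l = -(γ / l * B * t) := by ring
  have hu : 0 < 1 - exp (-(γ / l * B * t)) := by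
    rw [sub_pos, exp_lt_one_iff, neg_lt_zero]; positivity
  have hbound := rpow_le_of_ode_ineq hC1 hineq hA hB hκ hXnn ht
  rw [hexp, ← inv_div γ l]
  calc X t = (X t ^ (γ / l)) ^ (γ / l)⁻¹ := (rpow_rpow_inv (hXnn t ht.le) hκ.ne').symm
    _ ≤ (B / (A * (1 - exp (-(γ / l * B * t))))) ^ (γ / l)⁻¹ := by
        gcongr; exact rpow_nonneg (hXnn t ht.le) _
    _ ≤ (8 * B / (A * (1 - exp (-(γ / l * B * t))))) ^ (γ / l)⁻¹ := by gcongr; linarith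
end
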